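/- Let n ≥ 1, let k₁,…,k_n be integers, and let ~ be an equivalence relation on {1,…,n}. Let X be the set of all tuples (m₁,…,m_n) of natural numbers such that (m_i = m_j if and only if i ~ j, for all i,j) and k₁·m₁! + … + k_n·m_n! = 0. If for some index i₀ the set {m_{i₀} : (m₁,…,m_n) ∈ X} is infinite, then ∑_{i ~ i₀} k_i = 0. -/

import Mathlib

/-!
Pick a solution `m` whose value `v = m i₀` exceeds `∑ |kᵢ|`. The terms with `mᵢ < v` sum to
something of absolute value below `v!`, while all other terms are multiples of `v!`; hence the
terms with `mᵢ < v` sum to zero. The same holds with `v + 1` in place of `v`, so the terms with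
`mᵢ = v`, i.e. `(∑_{i ~ i₀} kᵢ) · v!`, sum to zero as well.
-/

open Finset Nat

section FactorialSums

variable {ι : Type*} (c : ι → ℤ) (m : ι → ℕ)

theorem factorial_dvd_sum_mul_factorial {t : Finset ι} {v : ℕ} (h : ∀ i ∈ t, v ≤ m i) :
    (v ! : ℤ) ∣ ∑ i ∈ t, c i * (m i)! :=
  dvd_sum fun i hi => (Int.natCast_dvd_natCast.mpr (factorial_dvd_factorial (h i hi))).mul_left _

theorem abs_sum_mul_factorial_lt {t : Finset ι} {v : ℕ} (h : ∀ i ∈ t, m i < v)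
    (hc : ∑ i ∈ t, |c i| < v) : |∑ i ∈ t, c i * (m i)!| < v ! := by
  have hv : (0 : ℤ) < v := (sum_nonneg fun i _ => abs_nonneg (c i)).trans_lt hc
  obtain ⟨w, rfl⟩ := exists_eq_add_one.mpr (Int.natCast_pos.mp hv)
  calc |∑ i ∈ t, c i * (m i)!|
      ≤ ∑ i ∈ t, |c i| * w ! := by
        refine (abs_sum_le_sum_abs _ _).trans (sum_le_sum fun i hi => ?_)
        rw [abs_mul, Nat.abs_cast]
        gcongr
        exact Nat.le_of_lt_succ (h i hi)
    _ < (w + 1 : ℕ) * w ! := by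
        rw [← sum_mul]
        gcongr
    _ = (w + 1)! := by push_cast [factorial_succ]; rfl

variable {s : Finset ι} {v : ℕ}

theorem sum_filter_lt_mul_factorial_eq_zero (hsum : ∑ i ∈ s, c i * (m i)! = 0)
    (hc : ∑ i ∈ s, |c i| < v) : ∑ i ∈ s with m i < v, c i * (m i)! = 0 := by
  have hsplit := sum_filter_add_sum_filter_not s (fun i => m i < v) (fun i => c i * (m i)!)
  rw [hsum, add_eq_zero_iff_eq_neg] at hsplit
  refine Int.eq_zero_of_abs_lt_dvd (m := (v ! : ℤ)) ?_ ?_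
  · rw [hsplit, dvd_neg]
    exact factorial_dvd_sum_mul_factorial c m fun i hi => not_lt.mp (mem_filter.mp hi).2
  · refine abs_sum_mul_factorial_lt c m (fun i hi => (mem_filter.mp hi).2) (lt_of_le_of_lt ?_ hc)
    exact sum_le_sum_of_subset_of_nonneg (filter_subset _ _) fun i _ _ => abs_nonneg (c i)

theorem sum_filter_eq_eq_zero_of_sum_mul_factorial_eq_zero (hsum : ∑ i ∈ s, c i * (m i)! = 0)
    (hc : ∑ i ∈ s, |c i| < v) : ∑ i ∈ s with m i = v, c i = 0 := by
  have hlevel : ∑ i ∈ s with m i = v, c i * (m i)! =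
      ∑ i ∈ s with m i < v + 1, c i * (m i)! - ∑ i ∈ s with m i < v, c i * (m i)! := by
    simp only [sum_filter, eq_sub_iff_add_eq, ← sum_add_distrib]
    refine sum_congr rfl fun i _ => ?_
    by_cases hlt : m i < v <;> by_cases heq : m i = v <;> simp [hlt, heq] <;> omega
  rw [sum_filter_lt_mul_factorial_eq_zero c m hsum hc,
    sum_filter_lt_mul_factorial_eq_zero c m hsum (hc.trans (by simp)), sub_zero,
    sum_congr rfl fun i hi => by rw [(mem_filter.mp hi).2], ← sum_mul] at hlevel
  exact (mul_eq_zero.mp hlevel).resolve_right (by positivity)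

end FactorialSums

open Classical

theorem sum_over_class_eq_zero_of_infinite_projection_general (n : ℕ)
    (k : Fin n → ℤ) (R : Fin n → Fin n → Prop) (i₀ : Fin n)
    (hinf : {v : ℕ | ∃ m : Fin n → ℕ,
        ((∀ i j, m i = m j ↔ R i j) ∧ ∑ i, k i * (Nat.factorial (m i) : ℤ) = 0) ∧
        v = m i₀}.Infinite) :
    ∑ i ∈ univ.filter (fun i => R i i₀), k i = 0 := by
  obtain ⟨v, ⟨m, ⟨hm, hsum⟩, rfl⟩, hv⟩ := hinf.exists_gt (∑ i, (k i).natAbs)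
  have hclass : univ.filter (fun i => R i i₀) = univ.filter (fun i => m i = m i₀) :=
    filter_congr fun i _ => (hm i i₀).symm
  rw [hclass]
  refine sum_filter_eq_eq_zero_of_sum_mul_factorial_eq_zero k m hsum ?_
  rw [← Int.ofNat_lt] at hv
  push_cast at hv
  exact hv

/-- Let `k₁, …, kₙ` be integers and `~` an equivalence relation on `{1, …, n}`. Let `X`
be the set of tuples `(m₁, …, mₙ)` of naturals with `mᵢ = mⱼ ↔ i ~ j` (for all `i, j`)
and `k₁·m₁! + … + kₙ·mₙ! = 0`. If for some index `i₀` the set of values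
`{m_{i₀} : m ∈ X}` is infinite, then `∑_{i ~ i₀} kᵢ = 0`. -/
theorem sum_over_class_eq_zero_of_infinite_projection (n : ℕ) (hn : 1 ≤ n)
    (k : Fin n → ℤ) (R : Fin n → Fin n → Prop) (hR : Equivalence R) (i₀ : Fin n)
    (hinf : {v : ℕ | ∃ m : Fin n → ℕ,
        ((∀ i j, m i = m j ↔ R i j) ∧ ∑ i, k i * (Nat.factorial (m i) : ℤ) = 0) ∧
        v = m i₀}.Infinite) :
    ∑ i ∈ univ.filter (fun i => R i i₀), k i = 0 :=
  sum_over_class_eq_zero_of_infinite_projection_general n k R i₀ hinf
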